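/- arXiv:2404.06623 — 17 statements merged into one kernel-verified Lean document; each statement's English description precedes it below -/
import Mathlib

section
/- Let ⟨X, μ⟩ be a generalized topological space. Then every dense set belongs to super(Iso(X)), i.e. D(X) ⊆ super(Iso(X)). Furthermore, if ⟨X, μ⟩ is not indiscrete, then ⟨X, μ⟩ is iso-dense if and only if super(Iso(X)) = D(X) ∪ {∅}. -/
variable {X : Type*}

/-- Quasiorder determined by a family of sets. -/
def relA (𝒜 : Set (Set X)) (x y : X) : Prop := ∀ A ∈ 𝒜, x ∈ A → y ∈ A

/-- Specialization topology of a quasiorder: the family of increasing sets. -/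
def tauR (r : X → X → Prop) : Set (Set X) := {U | ∀ x ∈ U, ∀ y, r x y → y ∈ U}

/-- Generalized topology determined by a family. -/
def muA (𝒜 : Set (Set X)) : Set (Set X) := {U | ∀ x ∈ U, ∃ A ∈ 𝒜, x ∈ A ∧ A ⊆ U}

/-- Extended generalized topology determined by a family. -/
def tmuA (𝒜 : Set (Set X)) : Set (Set X) :=
  muA 𝒜 ∪ {V | ∃ A ∈ 𝒜, A.Nonempty ∧ A ⊆ V}

/-- I(𝒜) = ⋂ (𝒜 \ {∅}). -/
def IA (𝒜 : Set (Set X)) : Set X := ⋂₀ (𝒜 \ {∅})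

/-- I_𝒜(x) = ⋂ {A ∈ 𝒜 : x ∈ A}. -/
def IAx (𝒜 : Set (Set X)) (x : X) : Set X := ⋂₀ {A | A ∈ 𝒜 ∧ x ∈ A}

/-- D is dense w.r.t. the family μ. -/
def GDense (μ : Set (Set X)) (D : Set X) : Prop := ∀ U ∈ μ, U.Nonempty → (U ∩ D).Nonempty

/-- The family of all μ-dense sets. -/
def Dfam (μ : Set (Set X)) : Set (Set X) := {D | GDense μ D}

/-- The set of μ-isolated points. -/
def IsoSet (μ : Set (Set X)) : Set X := {x | {x} ∈ μ}

/-- super(S): all supersets of S, together with ∅. -/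
def superS (S : Set X) : Set (Set X) := {U | S ⊆ U} ∪ {∅}

/-- μ is a generalized topology. -/
def IsGT (μ : Set (Set X)) : Prop := ∅ ∈ μ ∧ ∀ 𝒰 ⊆ μ, ⋃₀ 𝒰 ∈ μ

/-- τ is a topology on X (as a family of sets). -/
def IsTopFam (τ : Set (Set X)) : Prop :=
  ∅ ∈ τ ∧ Set.univ ∈ τ ∧ (∀ 𝒰 ⊆ τ, ⋃₀ 𝒰 ∈ τ) ∧ ∀ U ∈ τ, ∀ V ∈ τ, U ∩ V ∈ τ

/-- τ is an Alexandroff topology on X. -/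
def IsAlexFam (τ : Set (Set X)) : Prop :=
  IsTopFam τ ∧ ∀ 𝒰 ⊆ τ, 𝒰.Nonempty → ⋂₀ 𝒰 ∈ τ

/-- The family of dense open sets. -/
def DOfam (μ : Set (Set X)) : Set (Set X) := μ ∩ Dfam μ

/-- Closure w.r.t. a generalized topology. -/
def gcl (μ : Set (Set X)) (E : Set X) : Set X := ⋂₀ {C | E ⊆ C ∧ Cᶜ ∈ μ}

/-- Interior w.r.t. a generalized topology. -/
def gint (μ : Set (Set X)) (E : Set X) : Set X := ⋃₀ {U | U ∈ μ ∧ U ⊆ E}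

/-- E is nowhere dense w.r.t. μ. -/
def NwD (μ : Set (Set X)) (E : Set X) : Prop := gint μ (gcl μ E) = ∅

/-- μ is indiscrete. -/
def Indiscrete (μ : Set (Set X)) : Prop := μ ⊆ {∅, Set.univ}

theorem stmt0 (μ : Set (Set X)) (hμ : IsGT μ) :
    Dfam μ ⊆ superS (IsoSet μ) ∧
    (¬ Indiscrete μ →
      (GDense μ (IsoSet μ) ↔ superS (IsoSet μ) = Dfam μ ∪ {∅})) := by
  have h1 : Dfam μ ⊆ superS (IsoSet μ) := by
    intro D hD
    left
    intro x hx
    rcases hD {x} hx ⟨x, rfl⟩ with ⟨y, hy1, hy2⟩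
    rcases hy1 with rfl
    exact hy2
  refine ⟨h1, fun hne => ⟨fun hiso => ?_, fun heq => ?_⟩⟩
  · apply Set.Subset.antisymm
    · rintro U (hU | hU)
      · left
        intro V hV hVne
        rcases hiso V hV hVne with ⟨y, hy1, hy2⟩
        exact ⟨y, hy1, hU hy2⟩
      · right; exact hU
    · rintro U (hU | hU)
      · exact h1 hU
      · right; exact hU
  · have hIso : IsoSet μ ∈ superS (IsoSet μ) := Or.inl (fun x hx => hx)
    rw [heq] at hIso
    rcases hIso with hIso | hIso
    · exact hIso
    · -- IsoSet μ = ∅, derive contradiction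
      have hempty : IsoSet μ = ∅ := hIso
      exfalso
      simp only [Indiscrete, Set.subset_def, not_forall] at hne
      rcases hne with ⟨U, hUμ, hU2⟩
      have hUne : U ≠ ∅ := fun h => hU2 (Or.inl h)
      have hUnu : U ≠ Set.univ := fun h => hU2 (Or.inr h)
      have hUc : Uᶜ ∈ superS (IsoSet μ) := Or.inl (by rw [hempty]; exact Set.empty_subset _)
      rw [heq] at hUc
      rcases hUc with hUc | hUc
      · rcases hUc U hUμ (Set.nonempty_iff_ne_empty.mpr hUne) with ⟨y, hy1, hy2⟩
        exact hy2 hy1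
      · have : Uᶜ = (∅ : Set X) := hUc
        exact hUnu (by simpa [Set.compl_empty_iff] using this)
end

section
/- Let ⟨X, ≲⟩ be a quasiordered set and let M be the set of all ≲-maximal elements. If for every x ∈ X there exists m ∈ M with x ≲ m, then M = Iso(τ[≲]) (the set of isolated points of the generalized topological space ⟨X, τ[≲]⟩), the space ⟨X, τ[≲]⟩ is iso-dense, and D(τ[≲]) ∪ {∅} = super(M). -/
variable {X : Type*}

theorem stmt1 (r : X → X → Prop) (hrefl : ∀ x, r x x)
    (htrans : ∀ x y z, r x y → r y z → r x z)
    (M : Set X) (hM : M = {a | {y | r a y} = {a}})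
    (h : ∀ x, ∃ m ∈ M, r x m) :
    M = IsoSet (tauR r) ∧
    GDense (tauR r) (IsoSet (tauR r)) ∧
    Dfam (tauR r) ∪ {∅} = superS M := by
  have hMiso : M = IsoSet (tauR r) := by
    ext a
    simp only [hM, IsoSet, tauR, Set.mem_setOf_eq]
    constructor
    · intro ha x hx y hxy
      simp only [Set.mem_singleton_iff] at hx ⊢
      subst hx
      have hy : y ∈ ({y | r x y} : Set X) := hxy
      rw [ha] at hy
      exact hy
    · intro ha
      ext y
      simp only [Set.mem_setOf_eq, Set.mem_singleton_iff]
      exact ⟨fun hy => ha a rfl y hy, fun hy => hy ▸ hrefl a⟩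
  have hdense : ∀ D : Set X, M ⊆ D → GDense (tauR r) D := by
    intro D hMD U hU ⟨x, hx⟩
    obtain ⟨m, hm, hrm⟩ := h x
    exact ⟨m, hU x hx m hrm, hMD hm⟩
  refine ⟨hMiso, hdense _ (le_of_eq hMiso), ?_⟩
  ext D
  simp only [superS, Dfam, Set.mem_union, Set.mem_setOf_eq, Set.mem_singleton_iff]
  constructor
  · rintro (hD | rfl)
    · left
      intro m hm
      have hopen : {m} ∈ tauR r := by rw [hMiso] at hm; exact hm
      obtain ⟨y, hy1, hy2⟩ := hD {m} hopen ⟨m, rfl⟩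
      rw [Set.mem_singleton_iff] at hy1
      exact hy1 ▸ hy2
    · right; rfl
  · rintro (hMD | rfl)
    · left; exact hdense D hMD
    · right; rfl
end

section
/- Let X be a set and 𝒜 a family of subsets of X with 𝒜 ≠ ∅ and 𝒜 ≠ {∅}. Then: (a) ≲_𝒜 = ≲_{μ[𝒜]} and ≲_{μ̃[𝒜]} ⊆ ≲_𝒜; (b) for every x ∈ X belonging to some member of 𝒜, I_𝒜(x) = {y ∈ X : x ≲_𝒜 y}; (c) for every z ∈ I(𝒜), I(𝒜) = {y ∈ X : z ≲_𝒜 y}, and consequently I(𝒜) ∈ τ[≲_𝒜]; (d) μ[𝒜] ⊆ τ[≲_𝒜]. -/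
variable {X : Type*}

theorem stmt2 (𝒜 : Set (Set X)) (h1 : 𝒜 ≠ ∅) (h2 : 𝒜 ≠ {∅}) :
    (relA 𝒜 = relA (muA 𝒜) ∧ ∀ x y : X, relA (tmuA 𝒜) x y → relA 𝒜 x y) ∧
    (∀ x : X, (∃ A ∈ 𝒜, x ∈ A) → IAx 𝒜 x = {y | relA 𝒜 x y}) ∧
    ((∀ z ∈ IA 𝒜, IA 𝒜 = {y | relA 𝒜 z y}) ∧ IA 𝒜 ∈ tauR (relA 𝒜)) ∧
    muA 𝒜 ⊆ tauR (relA 𝒜) := by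
  constructor
  · constructor
    · ext x y
      constructor
      · intro h U hU hxU
        obtain ⟨A, hA, hxA, hAU⟩ := hU x hxU
        exact hAU (h A hA hxA)
      · intro h A hA hxA
        have hU : (⋃₀ {B | B ∈ 𝒜 ∧ B ⊆ A}) ∈ muA 𝒜 := by
          intro w hw
          obtain ⟨B, ⟨hB, hBA⟩, hwB⟩ := hw
          exact ⟨B, hB, hwB, fun v hv => ⟨B, ⟨hB, hBA⟩, hv⟩⟩
        have := h _ hU ⟨A, ⟨hA, subset_rfl⟩, hxA⟩
        obtain ⟨B, ⟨hB, hBA⟩, hyB⟩ := this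
        exact hBA hyB
    · intro x y h A hA hxA
      have hU : (⋃₀ {B | B ∈ 𝒜 ∧ B ⊆ A}) ∈ tmuA 𝒜 := by
        left
        intro w hw
        obtain ⟨B, ⟨hB, hBA⟩, hwB⟩ := hw
        exact ⟨B, hB, hwB, fun v hv => ⟨B, ⟨hB, hBA⟩, hv⟩⟩
      have := h _ hU ⟨A, ⟨hA, subset_rfl⟩, hxA⟩
      obtain ⟨B, ⟨hB, hBA⟩, hyB⟩ := this
      exact hBA hyB
  constructor
  · intro x _
    ext y
    constructor
    · intro hy A hA hxA
      exact hy A ⟨hA, hxA⟩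
    · intro hy A ⟨hA, hxA⟩
      exact hy A hA hxA
  constructor
  · constructor
    · intro z hz
      ext y
      constructor
      · intro hy A hA hzA
        exact hy A ⟨hA, fun h0 => (h0 ▸ hzA : z ∈ (∅ : Set X))⟩
      · intro hy A ⟨hA, hAne⟩
        have hzA : z ∈ A := hz A ⟨hA, hAne⟩
        exact hy A hA hzA
    · intro x hx y hxy A ⟨hA, hAne⟩
      exact hxy A hA (hx A ⟨hA, hAne⟩)
  · intro U hU x hxU y hxy
    obtain ⟨A, hA, hxA, hAU⟩ := hU x hxU
    exact hAU (hxy A hA hxA)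
end

section
/- Let X be a set and 𝒜 a family of subsets of X with 𝒜 ≠ ∅ and 𝒜 ≠ {∅}. Then: (1) τ[≲_𝒜] = τ[≲_{μ[𝒜]}] ⊆ τ[≲_{μ̃[𝒜]}]; (2) the equality τ[≲_𝒜] = τ[≲_{μ̃[𝒜]}] holds if and only if ≲_𝒜 ⊆ ≲_{μ̃[𝒜]}. -/
variable {X : Type*}

theorem stmt3 (𝒜 : Set (Set X)) (h1 : 𝒜 ≠ ∅) (h2 : 𝒜 ≠ {∅}) :
    (tauR (relA 𝒜) = tauR (relA (muA 𝒜)) ∧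
      tauR (relA 𝒜) ⊆ tauR (relA (tmuA 𝒜))) ∧
    (tauR (relA 𝒜) = tauR (relA (tmuA 𝒜)) ↔
      ∀ x y : X, relA 𝒜 x y → relA (tmuA 𝒜) x y) := by

  have hAmu : ∀ A ∈ 𝒜, A ∈ muA 𝒜 := fun A hA x hx => ⟨A, hA, hx, subset_rfl⟩
  have hAtmu : ∀ A ∈ 𝒜, A ∈ tmuA 𝒜 := fun A hA => Or.inl (hAmu A hA)
  have heq : ∀ x y, relA 𝒜 x y ↔ relA (muA 𝒜) x y := by
    intro x y
    constructor
    · intro h U hU hxU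
      obtain ⟨A, hA, hxA, hAU⟩ := hU x hxU
      exact hAU (h A hA hxA)
    · intro h A hA hxA
      exact h A (hAmu A hA) hxA
  have hmono : ∀ r s : X → X → Prop, (∀ x y, s x y → r x y) → tauR r ⊆ tauR s :=
    fun r s h U hU x hx y hxy => hU x hx y (h x y hxy)
  have htmsub : ∀ x y, relA (tmuA 𝒜) x y → relA 𝒜 x y :=
    fun x y h A hA hxA => h A (hAtmu A hA) hxA
  have hsub : tauR (relA 𝒜) ⊆ tauR (relA (tmuA 𝒜)) := hmono _ _ htmsub
  refine ⟨⟨?_, hsub⟩, ?_, ?_⟩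
  · apply Set.Subset.antisymm
    · exact hmono _ _ (fun x y h => (heq x y).mpr h)
    · exact hmono _ _ (fun x y h => (heq x y).mp h)
  · intro he x y hxy
    have hup : {z | relA (tmuA 𝒜) x z} ∈ tauR (relA (tmuA 𝒜)) :=
      fun a ha b hab U hU hxU => hab U hU (ha U hU hxU)
    rw [← he] at hup
    exact hup x (fun U _ hx => hx) y hxy
  · intro h
    exact Set.Subset.antisymm hsub (hmono _ _ h)
end

section
/- Let X be a set and 𝒜 a family of subsets of X with 𝒜 ≠ ∅ and 𝒜 ≠ {∅}. Then the following conditions are equivalent: (i) ⋃𝒜 = X and for every x ∈ X, I_𝒜(x) ∈ μ[𝒜]; (ii) τ[≲_𝒜] = μ[𝒜]; (iii) μ[𝒜] is an Alexandroff topology on X. -/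
variable {X : Type*}

theorem stmt4 (𝒜 : Set (Set X)) (h1 : 𝒜 ≠ ∅) (h2 : 𝒜 ≠ {∅}) :
    ((⋃₀ 𝒜 = Set.univ ∧ ∀ x : X, IAx 𝒜 x ∈ muA 𝒜) ↔ tauR (relA 𝒜) = muA 𝒜) ∧
    (tauR (relA 𝒜) = muA 𝒜 ↔ IsAlexFam (muA 𝒜)) := by

  have hmem : ∀ x y : X, y ∈ IAx 𝒜 x ↔ relA 𝒜 x y := by
    intro x y
    constructor
    · intro h A hA hxA; exact h A ⟨hA, hxA⟩
    · rintro h A ⟨hA, hxA⟩; exact h A hA hxA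
  have hsub : muA 𝒜 ⊆ tauR (relA 𝒜) := by
    intro U hU x hx y hxy
    obtain ⟨A, hA, hxA, hAU⟩ := hU x hx
    exact hAU (hxy A hA hxA)
  have hAinMu : ∀ A ∈ 𝒜, A ∈ muA 𝒜 := fun A hA x hx => ⟨A, hA, hx, subset_rfl⟩
  have hAlexTau : IsAlexFam (tauR (relA 𝒜)) := by
    refine ⟨⟨?_, ?_, ?_, ?_⟩, ?_⟩
    · intro x hx; exact absurd hx (Set.notMem_empty x)
    · intro x _ y _; trivial
    · intro 𝒰 h𝒰 x hx y hxy
      obtain ⟨U, hU, hxU⟩ := hx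
      exact ⟨U, hU, h𝒰 hU x hxU y hxy⟩
    · intro U hU V hV x hx y hxy
      exact ⟨hU x hx.1 y hxy, hV x hx.2 y hxy⟩
    · intro 𝒰 h𝒰 _ x hx y hxy U hU
      exact h𝒰 hU x (hx U hU) y hxy
  have h12 : (⋃₀ 𝒜 = Set.univ ∧ ∀ x : X, IAx 𝒜 x ∈ muA 𝒜) → tauR (relA 𝒜) = muA 𝒜 := by
    rintro ⟨hcov, hI⟩
    refine Set.Subset.antisymm ?_ hsub
    intro U hU x hx
    have hxI : x ∈ IAx 𝒜 x := (hmem x x).2 (fun A _ h => h)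
    obtain ⟨A, hA, hxA, hAI⟩ := hI x x hxI
    exact ⟨A, hA, hxA, fun y hy => hU x hx y ((hmem x y).1 (hAI hy))⟩
  have h21 : tauR (relA 𝒜) = muA 𝒜 → (⋃₀ 𝒜 = Set.univ ∧ ∀ x : X, IAx 𝒜 x ∈ muA 𝒜) := by
    intro h
    have huniv : Set.univ ∈ muA 𝒜 := by
      rw [← h]; intro x _ y _; trivial
    constructor
    · ext x
      simp only [Set.mem_univ, iff_true, Set.mem_sUnion]
      obtain ⟨A, hA, hxA, _⟩ := huniv x trivial
      exact ⟨A, hA, hxA⟩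
    · intro x
      rw [← h]
      intro y hy z hz
      exact (hmem x z).2 (fun A hA hxA => hz A hA ((hmem x y).1 hy A hA hxA))
  have h23 : tauR (relA 𝒜) = muA 𝒜 → IsAlexFam (muA 𝒜) := fun h => h ▸ hAlexTau
  have h32 : IsAlexFam (muA 𝒜) → tauR (relA 𝒜) = muA 𝒜 := by
    intro hAlex
    apply h12
    have huniv : Set.univ ∈ muA 𝒜 := hAlex.1.2.1
    constructor
    · ext x
      simp only [Set.mem_univ, iff_true, Set.mem_sUnion]
      obtain ⟨A, hA, hxA, _⟩ := huniv x trivial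
      exact ⟨A, hA, hxA⟩
    · intro x
      apply hAlex.2
      · rintro A ⟨hA, _⟩; exact hAinMu A hA
      · obtain ⟨A, hA, hxA, _⟩ := huniv x trivial
        exact ⟨A, hA, hxA⟩
  exact ⟨⟨h12, h21⟩, ⟨h23, h32⟩⟩
end

section
/- Let X be a set and 𝒜 a family of subsets of X with 𝒜 ≠ ∅ and 𝒜 ≠ {∅}. If I(𝒜) = ∅, then the topology τ[≲_{μ̃[𝒜]}] is the discrete topology on X (every subset of X belongs to it). -/
variable {X : Type*}

theorem stmt5 (𝒜 : Set (Set X)) (h1 : 𝒜 ≠ ∅) (h2 : 𝒜 ≠ {∅})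
    (hI : IA 𝒜 = ∅) :
    tauR (relA (tmuA 𝒜)) = Set.univ := by
  ext U
  simp only [Set.mem_univ, iff_true]
  intro x hx y hxy
  by_cases hxyeq : y = x
  · subst hxyeq; exact hx
  · -- y ∉ IA 𝒜 = ∅, so there is a nonempty A ∈ 𝒜 with y ∉ A
    have hy : y ∉ IA 𝒜 := by rw [hI]; exact Set.notMem_empty y
    simp only [IA, Set.mem_sInter, not_forall] at hy
    obtain ⟨A, ⟨hA𝒜, hAne⟩, hyA⟩ := hy
    have hAnonempty : A.Nonempty := Set.nonempty_iff_ne_empty.mpr hAne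
    have hV : A ∪ {x} ∈ tmuA 𝒜 := Or.inr ⟨A, hA𝒜, hAnonempty, Set.subset_union_left⟩
    have := hxy _ hV (Or.inr rfl)
    rcases this with h | h
    · exact absurd h hyA
    · exact absurd h hxyeq
end

section
/- Let X be a set and 𝒜 a family of subsets of X with 𝒜 ≠ ∅ and 𝒜 ≠ {∅}. Suppose I(𝒜) ≠ ∅. Then I(𝒜) is exactly the set of all weakly ≲_𝒜-maximal elements of X, and the following conditions are all equivalent: (i) τ[≲_{μ̃[𝒜]}] = μ̃[𝒜]; (ii) I(𝒜) ∈ μ[𝒜]; (iii) μ̃[𝒜] = super(I(𝒜)); (iv) μ̃[𝒜] is an Alexandroff topology on X. Furthermore, I(𝒜) meets every nonempty member of τ[≲_{μ̃[𝒜]}]. -/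
variable {X : Type*}

theorem stmt6 (𝒜 : Set (Set X)) (h1 : 𝒜 ≠ ∅) (h2 : 𝒜 ≠ {∅})
    (hI : IA 𝒜 ≠ ∅) :
    IA 𝒜 = {a | ∀ x : X, relA 𝒜 a x → relA 𝒜 x a} ∧
    ((tauR (relA (tmuA 𝒜)) = tmuA 𝒜 ↔ IA 𝒜 ∈ muA 𝒜) ∧
     (IA 𝒜 ∈ muA 𝒜 ↔ tmuA 𝒜 = superS (IA 𝒜)) ∧
     (tmuA 𝒜 = superS (IA 𝒜) ↔ IsAlexFam (tmuA 𝒜))) ∧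
    (∀ U ∈ tauR (relA (tmuA 𝒜)), U.Nonempty → (U ∩ IA 𝒜).Nonempty) := by
  have hIne : (IA 𝒜).Nonempty := Set.nonempty_iff_ne_empty.mpr hI
  obtain ⟨i0, hi0⟩ := hIne
  have hA0 : ∃ A ∈ 𝒜, A.Nonempty := by
    by_contra h
    push_neg at h
    exact h2 (Set.eq_singleton_iff_nonempty_unique_mem.mpr
      ⟨Set.nonempty_iff_ne_empty.mpr h1,
       fun A hA => h A hA⟩)
  obtain ⟨A0, hA0mem, hA0ne⟩ := hA0
  have hIsub : ∀ A ∈ 𝒜, A.Nonempty → IA 𝒜 ⊆ A := by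
    intro A hA hAne a ha
    exact Set.mem_sInter.mp ha A ⟨hA, fun h => hAne.ne_empty h⟩
  have hL2 : ∀ V ∈ tmuA 𝒜, V.Nonempty → IA 𝒜 ⊆ V := by
    intro V hV hVne
    rcases hV with hV | hV
    · obtain ⟨x, hx⟩ := hVne
      obtain ⟨A, hA, hxA, hAV⟩ := hV x hx
      exact (hIsub A hA ⟨x, hxA⟩).trans hAV
    · obtain ⟨A, hA, hAne, hAV⟩ := hV
      exact (hIsub A hA hAne).trans hAV
  have hrelI : ∀ x, ∀ b ∈ IA 𝒜, relA (tmuA 𝒜) x b := by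
    intro x b hb V hV hxV
    exact hL2 V hV ⟨x, hxV⟩ hb
  have hrel' : ∀ x y, relA (tmuA 𝒜) x y → y = x ∨ y ∈ IA 𝒜 := by
    intro x y h
    by_cases hyx : y = x
    · exact Or.inl hyx
    · right
      apply Set.mem_sInter.mpr
      intro A hA
      have hAn : A.Nonempty := Set.nonempty_iff_ne_empty.mpr hA.2
      have hV : (A ∪ {x}) ∈ tmuA 𝒜 := Or.inr ⟨A, hA.1, hAn, Set.subset_union_left⟩
      rcases h (A ∪ {x}) hV (Or.inr rfl) with h' | h'
      · exact h'
      · exact absurd h' hyx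
  have hL5 : tauR (relA (tmuA 𝒜)) = superS (IA 𝒜) := by
    ext U
    constructor
    · intro hU
      by_cases hUe : U = ∅
      · exact Or.inr hUe
      · obtain ⟨x, hx⟩ := Set.nonempty_iff_ne_empty.mpr hUe
        exact Or.inl (fun b hb => hU x hx b (hrelI x b hb))
    · intro hU
      rcases hU with hU | hU
      · intro x hx y hxy
        rcases hrel' x y hxy with rfl | hyI
        · exact hx
        · exact hU hyI
      · simp only [Set.mem_singleton_iff] at hU
        subst hU
        intro x hx
        exact absurd hx (Set.notMem_empty x)
  have hkey : IA 𝒜 ∈ muA 𝒜 ↔ ∃ A ∈ 𝒜, A.Nonempty ∧ A ⊆ IA 𝒜 := by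
    constructor
    · intro h
      obtain ⟨A, hA, hxA, hAI⟩ := h i0 hi0
      exact ⟨A, hA, ⟨i0, hxA⟩, hAI⟩
    · rintro ⟨A, hA, hAne, hAI⟩ x hx
      exact ⟨A, hA, hIsub A hA hAne hx, hAI⟩
  have hsub : tmuA 𝒜 ⊆ superS (IA 𝒜) := by
    intro V hV
    by_cases hVe : V = ∅
    · exact Or.inr hVe
    · exact Or.inl (hL2 V hV (Set.nonempty_iff_ne_empty.mpr hVe))
  have hempty : (∅ : Set X) ∈ muA 𝒜 := fun x hx => absurd hx (Set.notMem_empty x)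
  have heq1 : IA 𝒜 ∈ muA 𝒜 ↔ tmuA 𝒜 = superS (IA 𝒜) := by
    constructor
    · intro h
      apply Set.Subset.antisymm hsub
      intro U hU
      rcases hU with hIU | hU
      · obtain ⟨A, hA, hAne, hAI⟩ := hkey.mp h
        exact Or.inr ⟨A, hA, hAne, hAI.trans hIU⟩
      · simp only [Set.mem_singleton_iff] at hU
        subst hU
        exact Or.inl hempty
    · intro h
      have hImem : IA 𝒜 ∈ tmuA 𝒜 := by
        rw [h]; exact Or.inl (Set.mem_setOf_eq ▸ subset_rfl)
      rcases hImem with h' | h'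
      · exact h'
      · exact hkey.mpr h'
  have heq3 : tmuA 𝒜 = superS (IA 𝒜) ↔ IsAlexFam (tmuA 𝒜) := by
    constructor
    · intro h
      rw [h]
      refine ⟨⟨Or.inr rfl, Or.inl (Set.subset_univ _), ?_, ?_⟩, ?_⟩
      · intro 𝒰 h𝒰
        by_cases h' : ∀ U ∈ 𝒰, U = ∅
        · exact Or.inr (Set.sUnion_eq_empty.mpr h')
        · push_neg at h'
          obtain ⟨U, hU𝒰, hUne⟩ := h'
          rcases h𝒰 hU𝒰 with hIU | hUe
          · exact Or.inl (hIU.trans (Set.subset_sUnion_of_mem hU𝒰))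
          · exact absurd (Set.mem_singleton_iff.mp hUe) hUne.ne_empty
      · intro U hU V hV
        rcases hU with hU | hU
        · rcases hV with hV | hV
          · exact Or.inl (Set.subset_inter hU hV)
          · simp only [Set.mem_singleton_iff] at hV
            subst hV
            exact Or.inr (Set.inter_empty U)
        · simp only [Set.mem_singleton_iff] at hU
          subst hU
          exact Or.inr (Set.empty_inter V)
      · intro 𝒰 h𝒰 h𝒰ne
        by_cases h' : ∃ U ∈ 𝒰, U = ∅
        · obtain ⟨U, hU𝒰, hUe⟩ := h'
          have : ⋂₀ 𝒰 ⊆ ∅ := hUe ▸ Set.sInter_subset_of_mem hU𝒰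
          exact Or.inr (Set.subset_empty_iff.mp this)
        · push_neg at h'
          exact Or.inl (Set.subset_sInter fun U hU => (h𝒰 hU).resolve_right (fun hh => (h' U hU).ne_empty (Set.mem_singleton_iff.mp hh)))
    · intro h
      set 𝒰 : Set (Set X) := {V | V ∈ tmuA 𝒜 ∧ V.Nonempty} with h𝒰def
      have hA0U : A0 ∈ 𝒰 := ⟨Or.inr ⟨A0, hA0mem, hA0ne, subset_rfl⟩, hA0ne⟩
      have hIeq : ⋂₀ 𝒰 = IA 𝒜 := by
        apply Set.Subset.antisymm
        · intro a ha
          apply Set.mem_sInter.mpr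
          intro A hA
          have hAn : A.Nonempty := Set.nonempty_iff_ne_empty.mpr hA.2
          exact Set.mem_sInter.mp ha A ⟨Or.inr ⟨A, hA.1, hAn, subset_rfl⟩, hAn⟩
        · exact Set.subset_sInter fun V hV => hL2 V hV.1 hV.2
      have hImem : IA 𝒜 ∈ tmuA 𝒜 := by
        rw [← hIeq]
        exact h.2 𝒰 (fun V hV => hV.1) ⟨A0, hA0U⟩
      apply heq1.mp
      rcases hImem with h' | h'
      · exact h'
      · exact hkey.mpr h'
  refine ⟨?_, ⟨?_, heq1, heq3⟩, ?_⟩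
  · ext a
    constructor
    · intro ha x _ A hA hxA
      exact hIsub A hA ⟨x, hxA⟩ ha
    · intro ha
      have hab : relA 𝒜 a i0 := fun A hA haA => hIsub A hA ⟨a, haA⟩ hi0
      have hba := ha i0 hab
      apply Set.mem_sInter.mpr
      intro A hAmem
      exact hba A hAmem.1 (hIsub A hAmem.1 (Set.nonempty_iff_ne_empty.mpr hAmem.2) hi0)
  · rw [hL5]
    exact ⟨fun h => heq1.mpr h.symm, fun h => (heq1.mp h).symm⟩
  · intro U hU hUne
    obtain ⟨x, hx⟩ := hUne
    exact ⟨i0, hU x hx i0 (hrelI x i0 hi0), hi0⟩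
end

section
/- Let X be a set and 𝒜 a family of subsets of X with 𝒜 ≠ ∅ and 𝒜 ≠ {∅}. If I(𝒜) ≠ ∅ and τ[≲_𝒜] = μ[𝒜], then τ[≲_{μ̃[𝒜]}] = μ̃[𝒜]. -/
variable {X : Type*}

theorem stmt7 (𝒜 : Set (Set X)) (h1 : 𝒜 ≠ ∅) (h2 : 𝒜 ≠ {∅})
    (hI : IA 𝒜 ≠ ∅) (heq : tauR (relA 𝒜) = muA 𝒜) :
    tauR (relA (tmuA 𝒜)) = tmuA 𝒜 := by
  obtain ⟨i, hi⟩ := Set.nonempty_iff_ne_empty.2 hI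
  have hIsub : ∀ ⦃A : Set X⦄, A ∈ 𝒜 → A.Nonempty → ∀ j ∈ IA 𝒜, j ∈ A := by
    intro A hA hAne j hj
    exact hj A ⟨hA, fun h => hAne.ne_empty h⟩
  -- every point of I is above every point in relA (tmuA 𝒜)
  have key : ∀ x j, j ∈ IA 𝒜 → relA (tmuA 𝒜) x j := by
    intro x j hj V hV hxV
    rcases hV with hV | ⟨A, hA, hAne, hAV⟩
    · obtain ⟨A, hA, hxA, hAV⟩ := hV x hxV
      exact hAV (hIsub hA ⟨x, hxA⟩ j hj)
    · exact hAV (hIsub hA hAne j hj)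
  ext U
  constructor
  · intro hU
    rcases Set.eq_empty_or_nonempty U with rfl | ⟨x, hxU⟩
    · exact Or.inl (fun x hx => absurd hx (Set.notMem_empty x))
    · have hiU : i ∈ U := hU x hxU i (key x i hi)
      -- the upset of i under relA 𝒜
      have hW : {y | relA 𝒜 i y} ∈ tauR (relA 𝒜) := by
        intro y hy z hyz A hA hiA
        exact hyz A hA (hy A hA hiA)
      rw [heq] at hW
      obtain ⟨A, hA, hiA, hAW⟩ := hW i (fun A hA hiA => hiA)
      refine Or.inr ⟨A, hA, ⟨i, hiA⟩, ?_⟩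
      intro y hyA
      have hyI : y ∈ IA 𝒜 := by
        intro B hB
        exact hAW hyA B hB.1 (hi B hB)
      exact hU i hiU y (key i y hyI)
  · intro hU x hxU y hxy
    exact hxy U hU hxU
end

section
/- Let X be a set and 𝒜 a family of subsets of X with 𝒜 ≠ ∅ and 𝒜 ≠ {∅}. Suppose that I(𝒜) ≠ ∅ and τ[≲_𝒜] = μ̃[𝒜]. Then ≲_𝒜 = ≲_{μ̃[𝒜]}. -/
variable {X : Type*}

theorem stmt8 (𝒜 : Set (Set X)) (h1 : 𝒜 ≠ ∅) (h2 : 𝒜 ≠ {∅})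
    (hI : IA 𝒜 ≠ ∅) (heq : tauR (relA 𝒜) = tmuA 𝒜) :
    relA 𝒜 = relA (tmuA 𝒜) := by
  rw [← heq]
  ext x y
  constructor
  · intro h U hU hx
    exact hU x hx y h
  · intro h A hA hx
    exact h {z | relA 𝒜 x z} (fun a ha b hab B hB hxB => hab B hB (ha B hB hxB))
      (fun B hB hxB => hxB) A hA hx
end

section
/- Let ⟨X, μ⟩ be a non-indiscrete generalized topological space. Then: (i) I(D(X)) = Iso(X), and consequently I(D(X)) ∈ μ; (ii) I(DO(X)) = {x ∈ X : {x} is not nowhere dense}; (iii) Iso(X) ⊆ I(DO(X)); (iv) ⟨X, μ⟩ is iso-dense if and only if D(X) ∪ {∅} = super(I(D(X))). -/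
variable {X : Type*}

lemma gint_mem (μ : Set (Set X)) (hμ : IsGT μ) (E : Set X) : gint μ E ∈ μ :=
  hμ.2 _ (fun _ hU => hU.1)

lemma compl_gcl (μ : Set (Set X)) (E : Set X) : (gcl μ E)ᶜ = gint μ Eᶜ := by
  ext x
  simp only [gcl, gint, Set.mem_compl_iff, Set.mem_sInter, Set.mem_sUnion, Set.mem_setOf_eq]
  push_neg
  constructor
  · rintro ⟨C, ⟨hEC, hCc⟩, hx⟩
    exact ⟨Cᶜ, ⟨hCc, fun y hy hyE => hy (hEC hyE)⟩, hx⟩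
  · rintro ⟨V, ⟨hV, hVE⟩, hx⟩
    exact ⟨Vᶜ, ⟨fun y hy hyV => hVE hyV hy, by simpa using hV⟩, fun h => h hx⟩

lemma mem_gcl_self (μ : Set (Set X)) (x : X) : x ∈ gcl μ {x} := by
  intro C hC
  exact hC.1 rfl

theorem stmt9 (μ : Set (Set X)) (hμ : IsGT μ) (hni : ¬ Indiscrete μ) :
    (IA (Dfam μ) = IsoSet μ ∧ IA (Dfam μ) ∈ μ) ∧
    IA (DOfam μ) = {x : X | ¬ NwD μ {x}} ∧
    IsoSet μ ⊆ IA (DOfam μ) ∧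
    (GDense μ (IsoSet μ) ↔ Dfam μ ∪ {∅} = superS (IA (Dfam μ))) := by

  obtain ⟨U0, hU0μ, hU0⟩ := Set.not_subset.mp hni
  have hU0ne : U0 ≠ ∅ := fun h => hU0 (Or.inl h)
  have hU0nu : U0 ≠ Set.univ := fun h => hU0 (Or.inr h)
  -- Part (i): IA (Dfam μ) = IsoSet μ
  have hIA : IA (Dfam μ) = IsoSet μ := by
    ext x
    simp only [IA, Dfam, IsoSet, Set.mem_sInter, Set.mem_diff, Set.mem_setOf_eq,
      Set.mem_singleton_iff]
    constructor
    · intro h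
      by_contra hx
      have hD : GDense μ {x}ᶜ := by
        intro U hU hUne
        rcases Set.eq_empty_or_nonempty (U ∩ {x}ᶜ) with he | hne
        · exfalso
          have hsub : U ⊆ {x} := by
            intro y hy
            by_contra hy2
            exact Set.eq_empty_iff_forall_notMem.mp he y ⟨hy, hy2⟩
          rcases Set.subset_singleton_iff_eq.mp hsub with h1 | h1
          · exact hUne.ne_empty h1
          · exact hx (h1 ▸ hU)
        · exact hne
      have hne : ({x}ᶜ : Set X) ≠ ∅ := by
        intro h
        have hxu : ({x} : Set X) = Set.univ := Set.compl_empty_iff.mp h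
        rcases Set.subset_singleton_iff_eq.mp (hxu ▸ Set.subset_univ U0) with h1 | h1
        · exact hU0ne h1
        · exact hU0nu (h1.trans hxu)
      exact absurd (h _ ⟨hD, hne⟩) (fun hc => hc rfl)
    · intro hx D hD
      obtain ⟨y, hy1, hy2⟩ := hD.1 {x} hx ⟨x, rfl⟩
      exact hy1 ▸ hy2
  have hIAmem : IA (Dfam μ) ∈ μ := by
    rw [hIA]
    have : IsoSet μ = ⋃₀ ((fun x => ({x} : Set X)) '' IsoSet μ) := by
      ext y
      simp [IsoSet, eq_comm]
    rw [this]
    apply hμ.2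
    rintro S ⟨x, hx, rfl⟩
    exact hx
  -- Part (ii)
  have hIIevery : ∀ x : X, x ∈ IA (DOfam μ) ↔ ¬ NwD μ {x} := by
    intro x
    constructor
    · intro h hnwd
      set D := (gcl μ {x})ᶜ with hDdef
      have hDμ : D ∈ μ := by rw [hDdef, compl_gcl]; exact gint_mem μ hμ _
      have hDdense : GDense μ D := by
        intro U hU hUne
        rcases Set.eq_empty_or_nonempty (U ∩ D) with he | hne
        · exfalso
          have hsub : U ⊆ gcl μ {x} := by
            intro y hy
            by_contra hy2
            exact Set.eq_empty_iff_forall_notMem.mp he y ⟨hy, hy2⟩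
          have : U ⊆ gint μ (gcl μ {x}) := fun y hy => ⟨U, ⟨hU, hsub⟩, hy⟩
          obtain ⟨u, hu⟩ := hUne
          exact Set.eq_empty_iff_forall_notMem.mp hnwd u (this hu)
        · exact hne
      have hDne : D ≠ ∅ := by
        intro h
        have hcl : gcl μ {x} = Set.univ := Set.compl_empty_iff.mp h
        have : U0 ⊆ gint μ (gcl μ {x}) := by
          rw [hcl]
          exact fun y hy => ⟨U0, ⟨hU0μ, Set.subset_univ U0⟩, hy⟩
        obtain ⟨u, hu⟩ := Set.nonempty_iff_ne_empty.mpr hU0ne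
        exact Set.eq_empty_iff_forall_notMem.mp hnwd u (this hu)
      have hxD : x ∈ D := h D ⟨⟨hDμ, hDdense⟩, hDne⟩
      exact hxD (mem_gcl_self μ x)
    · intro hnwd D hD
      obtain ⟨⟨hDμ, hDdense⟩, hDne⟩ := hD
      obtain ⟨u, V, ⟨hVμ, hVcl⟩, huV⟩ := Set.nonempty_iff_ne_empty.mpr hnwd
      obtain ⟨y, hyV, hyD⟩ := hDdense V hVμ ⟨u, huV⟩
      by_contra hxD
      have hclosed : gcl μ {x} ⊆ Dᶜ := by
        apply Set.sInter_subset_of_mem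
        exact ⟨fun z hz => hz ▸ hxD, by simpa using hDμ⟩
      exact hclosed (hVcl hyV) hyD
  have hII : IA (DOfam μ) = {x : X | ¬ NwD μ {x}} := Set.ext hIIevery
  -- Part (iii)
  have hIII : IsoSet μ ⊆ IA (DOfam μ) := by
    intro x hx
    rw [hIIevery]
    intro hnwd
    have : x ∈ gint μ (gcl μ {x}) :=
      ⟨{x}, ⟨hx, fun y hy => hy ▸ mem_gcl_self μ x⟩, rfl⟩
    exact Set.eq_empty_iff_forall_notMem.mp hnwd x this
  refine ⟨⟨hIA, hIAmem⟩, hII, hIII, ?_⟩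
  rw [hIA]
  constructor
  · intro hdense
    ext D
    simp only [superS, Set.mem_union, Set.mem_setOf_eq, Set.mem_singleton_iff, Dfam]
    constructor
    · rintro (hD | hD)
      · left
        intro x hx
        obtain ⟨y, hy1, hy2⟩ := hD {x} hx ⟨x, rfl⟩
        exact hy1 ▸ hy2
      · exact Or.inr hD
    · rintro (hD | hD)
      · left
        intro U hU hUne
        obtain ⟨y, hy1, hy2⟩ := hdense U hU hUne
        exact ⟨y, hy1, hD hy2⟩
      · exact Or.inr hD
  · intro h
    have hiso : IsoSet μ ∈ Dfam μ ∪ {∅} := by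
      rw [h]
      exact Or.inl (fun _ ha => ha)
    rcases hiso with hiso | hiso
    · exact hiso
    · exfalso
      have hcne : (U0ᶜ : Set X) ≠ ∅ := by
        intro hc
        exact hU0nu (Set.compl_empty_iff.mp hc)
      have : U0ᶜ ∈ Dfam μ ∪ {∅} := by
        rw [h]
        exact Or.inl (show IsoSet μ ⊆ U0ᶜ from (Set.eq_of_mem_singleton hiso) ▸ Set.empty_subset _)
      rcases this with hd | hd
      · obtain ⟨y, hy1, hy2⟩ := hd U0 hU0μ (Set.nonempty_iff_ne_empty.mpr hU0ne)
        exact hy2 hy1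
      · exact hcne hd
end

section
/- Let ⟨X, μ⟩ be a non-indiscrete generalized topological space. If ⟨X, μ⟩ is either a T1-space or an Alexandroff T0-space, then I(DO(X)) = Iso(X). -/
variable {X : Type*}

theorem stmt10 (μ : Set (Set X)) (hμ : IsGT μ) (hni : ¬ Indiscrete μ)
    (h : (∀ x : X, ({x} : Set X)ᶜ ∈ μ) ∨
      ((∀ 𝒰 ⊆ μ, 𝒰.Nonempty → ⋂₀ 𝒰 ∈ μ) ∧
        ∀ x y : X, x ≠ y → ∃ U ∈ μ, ∃ z : X, U ∩ {x, y} = {z})) :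
    IA (DOfam μ) = IsoSet μ := by

  -- there is a nonempty open set
  have hex : ∃ U ∈ μ, U.Nonempty := by
    by_contra hno
    push_neg at hno
    exact hni (fun U hU => Or.inl (hno U hU))
  ext x
  constructor
  · -- x ∈ IA (DOfam μ) → x isolated
    intro hx
    have hxmem : ∀ D, D ∈ μ → GDense μ D → D ≠ ∅ → x ∈ D := by
      intro D hDμ hDd hDne
      exact Set.mem_sInter.mp hx D ⟨⟨hDμ, hDd⟩, hDne⟩
    rcases h with h1 | ⟨hA, hT0⟩
    · -- T1 case
      by_contra hxμ
      have hdense : GDense μ ({x}ᶜ : Set X) := by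
        intro U hU hUne
        by_contra hcon
        rw [Set.not_nonempty_iff_eq_empty] at hcon
        have hsub : U ⊆ {x} := by
          intro w hw
          by_contra hwx
          exact absurd hcon (Set.nonempty_iff_ne_empty.mp ⟨w, hw, hwx⟩)
        have he : U = {x} := (Set.Nonempty.subset_singleton_iff hUne).mp hsub
        rw [he] at hU
        exact hxμ hU
      have hne : ({x}ᶜ : Set X) ≠ ∅ := by
        intro hcne
        apply hni
        intro U hU
        rcases U.eq_empty_or_nonempty with rfl | hUne
        · exact Or.inl rfl
        · right
          have huniv : (Set.univ : Set X) = {x} := by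
            rw [← compl_compl ({x} : Set X), hcne, Set.compl_empty]
          have hsub : U ⊆ {x} := huniv ▸ Set.subset_univ U
          rw [(Set.Nonempty.subset_singleton_iff hUne).mp hsub, huniv]
          exact rfl
      have := hxmem ({x}ᶜ) (h1 x) hdense hne
      exact this rfl
    · -- Alexandroff + T0 case
      by_contra hxμ
      set M : X → Set X := fun z => ⋂₀ {U | U ∈ μ ∧ z ∈ U} with hM
      have hMmem : ∀ z, z ∈ ⋃₀ μ → M z ∈ μ := by
        rintro z ⟨U, hU, hz⟩
        exact hA {U | U ∈ μ ∧ z ∈ U} (fun V hV => hV.1) ⟨U, hU, hz⟩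
      have hMself : ∀ z, z ∈ M z := fun z => Set.mem_sInter.mpr (fun V hV => hV.2)
      have hMsub : ∀ z U, U ∈ μ → z ∈ U → M z ⊆ U := fun z U hU hz =>
        Set.sInter_subset_of_mem ⟨hU, hz⟩
      -- x belongs to the dense open set ⋃₀ μ
      have hD0μ : ⋃₀ μ ∈ μ := hμ.2 μ (subset_refl μ)
      have hD0d : GDense μ (⋃₀ μ) := by
        rintro U hU ⟨w, hw⟩
        exact ⟨w, hw, ⟨U, hU, hw⟩⟩
      have hD0ne : (⋃₀ μ : Set X) ≠ ∅ := by
        obtain ⟨U, hU, w, hw⟩ := hex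
        exact Set.nonempty_iff_ne_empty.mp ⟨w, U, hU, hw⟩
      have hxD0 : x ∈ ⋃₀ μ := hxmem _ hD0μ hD0d hD0ne
      have hMxμ : M x ∈ μ := hMmem x hxD0
      -- find y ≠ x in M x
      obtain ⟨y, hyMx, hyx⟩ : ∃ y ∈ M x, y ≠ x := by
        by_contra hc
        push_neg at hc
        have he : M x = {x} := Set.Subset.antisymm (fun w hw => hc w hw)
          (Set.singleton_subset_iff.mpr (hMself x))
        rw [he] at hMxμ
        exact hxμ hMxμ
      obtain ⟨U, hU, z, hUz⟩ := hT0 x y (fun he => hyx he.symm)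
      have hzU : z ∈ U ∩ ({x, y} : Set X) := hUz ▸ rfl
      have hxU : x ∉ U := by
        intro hxU
        have hyU : y ∈ U := hMsub x U hU hxU hyMx
        have hxz : x = z := by
          have : x ∈ ({z} : Set X) := hUz ▸ ⟨hxU, Or.inl rfl⟩
          exact this
        have hyz : y = z := by
          have : y ∈ ({z} : Set X) := hUz ▸ ⟨hyU, Or.inr rfl⟩
          exact this
        exact hyx (hyz.trans hxz.symm)
      have hzy : z = y := by
        rcases hzU.2 with hzx | hzy
        · exact absurd (hzx ▸ hzU.1) hxU
        · exact hzy
      have hyU : y ∈ U := hzy ▸ hzU.1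
      have hxMy : x ∉ M y := fun hc => hxU (hMsub y U hU hyU hc)
      have hyD0 : y ∈ ⋃₀ μ := ⟨M x, hMxμ, hyMx⟩
      -- the dense open set avoiding x
      set 𝒰 : Set (Set X) := {V | ∃ z ∈ ⋃₀ μ, x ∉ M z ∧ V = M z} with h𝒰
      have h𝒰μ : 𝒰 ⊆ μ := by rintro V ⟨w, hw, _, rfl⟩; exact hMmem w hw
      have hDμ : ⋃₀ 𝒰 ∈ μ := hμ.2 𝒰 h𝒰μ
      have hyD : y ∈ ⋃₀ 𝒰 := ⟨M y, ⟨y, hyD0, hxMy, rfl⟩, hMself y⟩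
      have hxD : x ∉ ⋃₀ 𝒰 := by
        rintro ⟨V, ⟨w, hw, hxw, rfl⟩, hxV⟩
        exact hxw hxV
      have hDd : GDense μ (⋃₀ 𝒰) := by
        rintro U' hU' ⟨w, hw⟩
        have hwD0 : w ∈ ⋃₀ μ := ⟨U', hU', hw⟩
        by_cases hxw : x ∈ M w
        · have hMxw : M x ⊆ M w := hMsub x (M w) (hMmem w hwD0) hxw
          exact ⟨y, hMsub w U' hU' hw (hMxw hyMx), hyD⟩
        · exact ⟨w, hw, ⟨M w, ⟨w, hwD0, hxw, rfl⟩, hMself w⟩⟩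
      exact hxD (hxmem _ hDμ hDd (Set.nonempty_iff_ne_empty.mp ⟨y, hyD⟩))
  · -- x isolated → x ∈ IA (DOfam μ)
    intro hx
    apply Set.mem_sInter.mpr
    rintro D ⟨⟨hDμ, hDd⟩, _⟩
    obtain ⟨z, hz1, hz2⟩ := hDd {x} hx ⟨x, rfl⟩
    exact hz1 ▸ hz2
end

section
/- Let ⟨X, μ⟩ be a non-indiscrete generalized topological space. Then: (i) if ⟨X, μ⟩ is dense-in-itself, then τ[≲_{D(X)}] is the discrete topology on X; (ii) if every singleton of X is nowhere dense, then τ[≲_{μ̃[DO(X)]}] is the discrete topology on X. -/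
variable {X : Type*}

theorem stmt11 (μ : Set (Set X)) (hμ : IsGT μ) (hni : ¬ Indiscrete μ) :
    (IsoSet μ = ∅ → tauR (relA (Dfam μ)) = Set.univ) ∧
    ((∀ x : X, NwD μ {x}) → tauR (relA (tmuA (DOfam μ))) = Set.univ) := by
  constructor
  · intro hiso
    ext U
    simp only [Set.mem_univ, iff_true]
    intro x hx y hr
    rcases eq_or_ne y x with rfl | hne
    · exact hx
    · exfalso
      have hd : ({y}ᶜ : Set X) ∈ Dfam μ := by
        intro V hV hVne
        rcases Set.eq_empty_or_nonempty (V ∩ {y}ᶜ) with he | h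
        · exfalso
          have hsub : V ⊆ {y} := by
            intro v hv
            by_contra hv'
            exact Set.eq_empty_iff_forall_notMem.mp he v ⟨hv, hv'⟩
          have hVy : V = {y} := (hVne.subset_singleton_iff).mp hsub
          have hy : y ∈ IsoSet μ := show ({y} : Set X) ∈ μ from hVy ▸ hV
          rw [hiso] at hy
          exact hy
        · exact h
      exact (hr {y}ᶜ hd (by simpa using hne.symm)) rfl
  · intro hnwd
    ext U
    simp only [Set.mem_univ, iff_true]
    intro x hx y hr
    rcases eq_or_ne y x with rfl | hne
    · exact hx
    · exfalso
      have hyc : y ∈ gcl μ {y} := fun C hC => hC.1 rfl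
      have hWμ : (gcl μ {y})ᶜ ∈ μ := by
        have heq : (gcl μ {y})ᶜ = ⋃₀ (compl '' {C | ({y} : Set X) ⊆ C ∧ Cᶜ ∈ μ}) := by
          rw [gcl, Set.compl_sInter]
        rw [heq]
        apply hμ.2
        rintro _ ⟨C, hC, rfl⟩
        exact hC.2
      have hWd : GDense μ ((gcl μ {y})ᶜ) := by
        intro V hV hVne
        rcases Set.eq_empty_or_nonempty (V ∩ (gcl μ {y})ᶜ) with he | h
        · exfalso
          have hsub : V ⊆ gcl μ {y} := by
            intro v hv
            by_contra hv'
            exact Set.eq_empty_iff_forall_notMem.mp he v ⟨hv, hv'⟩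
          have hint : V ⊆ gint μ (gcl μ {y}) := fun v hv => ⟨V, ⟨hV, hsub⟩, hv⟩
          rw [hnwd y] at hint
          rcases hVne with ⟨v, hv⟩
          exact hint hv
        · exact h
      have hWne : ((gcl μ {y})ᶜ : Set X).Nonempty := by
        rcases Set.not_subset.mp hni with ⟨V, hV, hVn⟩
        have hVne : V.Nonempty := by
          rcases Set.eq_empty_or_nonempty V with rfl | h
          · exact absurd (Or.inl rfl) hVn
          · exact h
        rcases hWd V hV hVne with ⟨w, _, hw⟩
        exact ⟨w, hw⟩
      have hVmem : ((gcl μ {y})ᶜ ∪ {x}) ∈ tmuA (DOfam μ) :=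
        Or.inr ⟨(gcl μ {y})ᶜ, ⟨hWμ, hWd⟩, hWne, Set.subset_union_left⟩
      have hy := hr _ hVmem (Or.inr rfl)
      rcases hy with hy | hy
      · exact hy hyc
      · exact hne hy
end

section
/- Let ⟨X, μ⟩ be a non-indiscrete generalized topological space. Then the following conditions are equivalent: (i) τ[≲_{D(X)}] = D(X) ∪ {∅}; (ii) D(X) ∪ {∅} is an Alexandroff topology on X; (iii) ⟨X, μ⟩ is iso-dense. -/
variable {X : Type*}

lemma tauR_alex (r : X → X → Prop) : IsAlexFam (tauR r) := by
  refine ⟨⟨?_, ?_, ?_, ?_⟩, ?_⟩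
  · intro x hx; exact absurd hx (Set.notMem_empty x)
  · intro x _ y _; trivial
  · intro 𝒰 h𝒰 x hx y hr
    obtain ⟨U, hU, hxU⟩ := hx
    exact ⟨U, hU, h𝒰 hU x hxU y hr⟩
  · intro U hU V hV x hx y hr
    exact ⟨hU x hx.1 y hr, hV x hx.2 y hr⟩
  · intro 𝒰 h𝒰 _ x hx y hr U hU
    exact h𝒰 hU x (hx U hU) y hr

lemma iso_subset_dense (μ : Set (Set X)) {D : Set X} (hD : D ∈ Dfam μ) :
    IsoSet μ ⊆ D := by
  intro x hx
  obtain ⟨y, hy1, hy2⟩ := hD {x} hx ⟨x, rfl⟩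
  rwa [show y = x from hy1] at hy2

lemma dense_of_iso_subset (μ : Set (Set X)) (h : GDense μ (IsoSet μ)) {D : Set X}
    (hD : IsoSet μ ⊆ D) : D ∈ Dfam μ := by
  intro U hU hUne
  obtain ⟨y, hy1, hy2⟩ := h U hU hUne
  exact ⟨y, hy1, hD hy2⟩

lemma compl_singleton_dense (μ : Set (Set X)) {x : X} (hx : x ∉ IsoSet μ) :
    ({x}ᶜ : Set X) ∈ Dfam μ := by
  intro U hU hUne
  by_contra h
  have hsub : U ⊆ {x} := by
    intro u hu
    by_contra hu'
    exact h ⟨u, hu, hu'⟩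
  have hUx : U = {x} := (Set.Nonempty.subset_singleton_iff hUne).mp hsub
  exact hx (by rw [IsoSet, Set.mem_setOf_eq, ← hUx]; exact hU)

lemma alex_to_dense (μ : Set (Set X)) (hni : ¬ Indiscrete μ)
    (hA : IsAlexFam (Dfam μ ∪ {∅})) : GDense μ (IsoSet μ) := by
  have key : ∀ U ∈ μ, U.Nonempty → U ∩ IsoSet μ = ∅ → U = Set.univ := by
    intro U hU hUne hdis
    have hnotiso : ∀ u ∈ U, u ∉ IsoSet μ := by
      intro u hu hui
      exact absurd hdis (Set.nonempty_iff_ne_empty.mp ⟨u, hu, hui⟩)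
    set 𝒰 : Set (Set X) := (fun u => ({u}ᶜ : Set X)) '' U with h𝒰def
    have h𝒰sub : 𝒰 ⊆ Dfam μ ∪ {∅} := by
      rintro _ ⟨u, hu, rfl⟩
      exact Or.inl (compl_singleton_dense μ (hnotiso u hu))
    have h𝒰ne : 𝒰.Nonempty := hUne.image _
    have hinter : ⋂₀ 𝒰 = Uᶜ := by
      ext z
      simp only [Set.mem_sInter, h𝒰def, Set.mem_image, Set.mem_compl_iff]
      constructor
      · intro h hz
        exact h {z}ᶜ ⟨z, hz, rfl⟩ rfl
      · rintro hz _ ⟨u, hu, rfl⟩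
        simp only [Set.mem_compl_iff, Set.mem_singleton_iff]
        rintro rfl; exact hz hu
    have := hA.2 𝒰 h𝒰sub h𝒰ne
    rw [hinter] at this
    rcases this with h | h
    · obtain ⟨y, hy1, hy2⟩ := h U hU hUne
      exact absurd hy1 hy2
    · have : Uᶜ = (∅ : Set X) := h
      simpa using congrArg (·ᶜ) this
  obtain ⟨W, hWμ, hW⟩ := Set.not_subset.mp hni
  have hWne : W.Nonempty := by
    rcases Set.eq_empty_or_nonempty W with rfl | h
    · exact absurd (Or.inl rfl) hW
    · exact h
  intro U hU hUne
  by_contra h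
  have hdis : U ∩ IsoSet μ = ∅ := Set.not_nonempty_iff_eq_empty.mp h
  have hUuniv := key U hU hUne hdis
  have hIsoEmpty : IsoSet μ = ∅ := by
    rw [hUuniv, Set.univ_inter] at hdis; exact hdis
  have hWdis : W ∩ IsoSet μ = ∅ := by rw [hIsoEmpty, Set.inter_empty]
  exact hW (Or.inr (key W hWμ hWne hWdis))

lemma dense_to_tau (μ : Set (Set X)) (h : GDense μ (IsoSet μ)) :
    tauR (relA (Dfam μ)) = Dfam μ ∪ {∅} := by
  have relA_iso : ∀ x : X, ∀ y ∈ IsoSet μ, relA (Dfam μ) x y := by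
    intro x y hy D hD _
    exact iso_subset_dense μ hD hy
  have relA_mem : ∀ x y : X, relA (Dfam μ) x y → y ∈ insert x (IsoSet μ) := by
    intro x y hxy
    have hD : (insert x (IsoSet μ)) ∈ Dfam μ :=
      dense_of_iso_subset μ h (Set.subset_insert _ _)
    exact hxy _ hD (Set.mem_insert _ _)
  ext U
  constructor
  · intro hUt
    rcases Set.eq_empty_or_nonempty U with rfl | ⟨x, hx⟩
    · exact Or.inr rfl
    · refine Or.inl (dense_of_iso_subset μ h ?_)
      intro y hy
      exact hUt x hx y (relA_iso x y hy)
  · rintro (hUd | hU0)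
    · intro x hx y hxy
      rcases relA_mem x y hxy with h1 | h2
      · exact h1 ▸ hx
      · exact iso_subset_dense μ hUd h2
    · intro x hx
      rw [show U = (∅ : Set X) from hU0] at hx
      exact absurd hx (Set.notMem_empty x)

theorem stmt12 (μ : Set (Set X)) (hμ : IsGT μ) (hni : ¬ Indiscrete μ) :
    (tauR (relA (Dfam μ)) = Dfam μ ∪ {∅} ↔ IsAlexFam (Dfam μ ∪ {∅})) ∧
    (IsAlexFam (Dfam μ ∪ {∅}) ↔ GDense μ (IsoSet μ)) := by
  have h12 : tauR (relA (Dfam μ)) = Dfam μ ∪ {∅} → IsAlexFam (Dfam μ ∪ {∅}) :=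
    fun h => h ▸ tauR_alex _
  have h23 := alex_to_dense μ hni
  have h31 := dense_to_tau μ
  exact ⟨⟨h12, fun h => h31 (h23 h)⟩, ⟨h23, fun h => h12 (h31 h)⟩⟩
end

section
/- Let ⟨X, μ⟩ be a non-indiscrete generalized topological space. Then the following conditions are equivalent: (i) τ[≲_{μ̃[DO(X)]}] = μ̃[DO(X)]; (ii) {x ∈ X : {x} is not nowhere dense} ∈ DO(X); (iii) μ̃[DO(X)] = super({x ∈ X : {x} is not nowhere dense}); (iv) μ̃[DO(X)] is an Alexandroff topology on X. -/
variable {X : Type*}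

section AuxLemmas
variable {X : Type*} {μ : Set (Set X)}

lemma mem_superS {S U : Set X} : U ∈ superS S ↔ S ⊆ U ∨ U = ∅ := by
  simp [superS, or_comm]

lemma alex_superS (S : Set X) : IsAlexFam (superS S) := by
  classical
  constructor
  · refine ⟨mem_superS.2 (Or.inr rfl), mem_superS.2 (Or.inl (Set.subset_univ S)), ?_, ?_⟩
    · intro 𝒰 h𝒰
      by_cases hex : ∃ W ∈ 𝒰, S ⊆ W
      · obtain ⟨W, hW, hSW⟩ := hex
        exact mem_superS.2 (Or.inl (hSW.trans (Set.subset_sUnion_of_mem hW)))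
      · push_neg at hex
        refine mem_superS.2 (Or.inr (Set.eq_empty_iff_forall_notMem.2 ?_))
        rintro x ⟨W, hW, hxW⟩
        rcases mem_superS.1 (h𝒰 hW) with h | rfl
        · exact hex W hW h
        · exact hxW
    · intro U hU V hV
      rcases mem_superS.1 hU with hU' | rfl
      · rcases mem_superS.1 hV with hV' | rfl
        · exact mem_superS.2 (Or.inl (Set.subset_inter hU' hV'))
        · exact mem_superS.2 (Or.inr (by simp))
      · exact mem_superS.2 (Or.inr (by simp))
  · rintro 𝒰 h𝒰 ⟨W0, hW0⟩
    by_cases hex : ∃ W ∈ 𝒰, W = ∅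
    · obtain ⟨W, hW, rfl⟩ := hex
      exact mem_superS.2
        (Or.inr (Set.eq_empty_of_subset_empty (Set.sInter_subset_of_mem hW)))
    · push_neg at hex
      refine mem_superS.2 (Or.inl fun s hs => Set.mem_sInter.2 fun W hW => ?_)
      rcases mem_superS.1 (h𝒰 hW) with h | h
      · exact h hs
      · exact absurd h (hex W hW).ne_empty

lemma gcl_compl_mem (hμ : IsGT μ) (E : Set X) : (gcl μ E)ᶜ ∈ μ := by
  have h1 : (gcl μ E)ᶜ = ⋃₀ (compl '' {C | E ⊆ C ∧ Cᶜ ∈ μ}) := by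
    rw [gcl, Set.compl_sInter]
  rw [h1]
  exact hμ.2 _ (by rintro W ⟨C, hC, rfl⟩; exact hC.2)

lemma nwd_singleton_iff (hμ : IsGT μ) (x : X) :
    NwD μ {x} ↔ ∃ A ∈ DOfam μ, x ∉ A := by
  constructor
  · intro h
    refine ⟨(gcl μ {x})ᶜ, ⟨gcl_compl_mem hμ _, ?_⟩, ?_⟩
    · intro U hU hUne
      by_contra hc
      have hsub : U ⊆ gcl μ {x} := by
        intro u hu
        by_contra hugc
        exact hc ⟨u, hu, hugc⟩
      have hsub2 : U ⊆ gint μ (gcl μ {x}) := fun u hu => ⟨U, ⟨hU, hsub⟩, hu⟩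
      obtain ⟨u, hu⟩ := hUne
      have h' : gint μ (gcl μ {x}) = ∅ := h
      have := hsub2 hu
      rw [h'] at this
      exact this
    · simp only [Set.mem_compl_iff, not_not]
      exact fun C hC => hC.1 rfl
  · rintro ⟨A, ⟨hAμ, hAd⟩, hxA⟩
    have hmem : Aᶜ ∈ {C | ({x} : Set X) ⊆ C ∧ Cᶜ ∈ μ} := by
      refine ⟨?_, by rwa [compl_compl]⟩
      intro z hz
      rcases hz with rfl
      exact hxA
    have hsub : gcl μ {x} ⊆ Aᶜ := Set.sInter_subset_of_mem hmem
    show gint μ (gcl μ {x}) = ∅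
    refine Set.eq_empty_iff_forall_notMem.2 ?_
    rintro y ⟨U, ⟨hUμ, hUsub⟩, hyU⟩
    obtain ⟨z, hzU, hzA⟩ := hAd U hUμ ⟨y, hyU⟩
    exact (hsub (hUsub hzU)) hzA

lemma notNwD_eq (hμ : IsGT μ) : {x : X | ¬ NwD μ {x}} = ⋂₀ DOfam μ := by
  ext x
  simp only [Set.mem_setOf_eq, nwd_singleton_iff hμ, Set.mem_sInter]
  push_neg
  rfl

lemma mem_tmu (hne : ∀ A ∈ DOfam μ, A.Nonempty) {V : Set X} :
    V ∈ tmuA (DOfam μ) ↔ V = ∅ ∨ ∃ A ∈ DOfam μ, A ⊆ V := by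
  simp only [tmuA, muA, Set.mem_union, Set.mem_setOf_eq]
  constructor
  · rintro (hV | ⟨A, hA, _, hAV⟩)
    · rcases V.eq_empty_or_nonempty with rfl | ⟨x, hx⟩
      · exact Or.inl rfl
      · obtain ⟨A, hA, _, hAV⟩ := hV x hx
        exact Or.inr ⟨A, hA, hAV⟩
    · exact Or.inr ⟨A, hA, hAV⟩
  · rintro (rfl | ⟨A, hA, hAV⟩)
    · exact Or.inl (fun x hx => absurd hx (Set.notMem_empty x))
    · exact Or.inr ⟨A, hA, hne A hA, hAV⟩

end AuxLemmas

theorem stmt13 (μ : Set (Set X)) (hμ : IsGT μ) (hni : ¬ Indiscrete μ) :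
    (tauR (relA (tmuA (DOfam μ))) = tmuA (DOfam μ) ↔
      {x : X | ¬ NwD μ {x}} ∈ DOfam μ) ∧
    ({x : X | ¬ NwD μ {x}} ∈ DOfam μ ↔
      tmuA (DOfam μ) = superS {x : X | ¬ NwD μ {x}}) ∧
    (tmuA (DOfam μ) = superS {x : X | ¬ NwD μ {x}} ↔
      IsAlexFam (tmuA (DOfam μ))) := by
  classical
  rw [Indiscrete, Set.not_subset] at hni
  obtain ⟨U0, hU0μ, hU0⟩ := hni
  simp only [Set.mem_insert_iff, Set.mem_singleton_iff, not_or] at hU0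
  obtain ⟨hU0ne, hU0nu⟩ := hU0
  obtain ⟨a, ha⟩ := Set.nonempty_iff_ne_empty.2 hU0ne
  obtain ⟨b, hb⟩ : ∃ b, b ∉ U0 := by
    by_contra h
    push_neg at h
    exact hU0nu (Set.eq_univ_of_forall h)
  have hab : a ≠ b := fun h => hb (h ▸ ha)
  have hne : ∀ A ∈ DOfam μ, A.Nonempty := by
    intro A hA
    obtain ⟨z, _, hz⟩ := hA.2 U0 hU0μ ⟨a, ha⟩
    exact ⟨z, hz⟩
  have hsing : ¬ (∀ x : X, ∃ A ∈ DOfam μ, A ⊆ {x}) := by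
    intro h
    obtain ⟨A, hA, hAa⟩ := h a
    obtain ⟨B, hB, hBb⟩ := h b
    obtain ⟨z, hzB, hzA⟩ := hA.2 B hB.1 (hne B hB)
    exact hab ((Set.mem_singleton_iff.1 (hAa hzA)).symm.trans
      (Set.mem_singleton_iff.1 (hBb hzB)))
  rw [notNwD_eq hμ]
  by_cases hD : (DOfam μ).Nonempty
  · obtain ⟨A0, hA0⟩ := hD
    have e23 : (⋂₀ DOfam μ ∈ DOfam μ) ↔ (tmuA (DOfam μ) = superS (⋂₀ DOfam μ)) := by
      constructor
      · intro h2
        ext V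
        rw [mem_tmu hne, mem_superS]
        constructor
        · rintro (rfl | ⟨A, hA, hAV⟩)
          · exact Or.inr rfl
          · exact Or.inl ((Set.sInter_subset_of_mem hA).trans hAV)
        · rintro (hIV | rfl)
          · exact Or.inr ⟨_, h2, hIV⟩
          · exact Or.inl rfl
      · intro h3
        have hImem : ⋂₀ DOfam μ ∈ tmuA (DOfam μ) := by
          rw [h3]
          exact mem_superS.2 (Or.inl subset_rfl)
        rcases (mem_tmu hne).1 hImem with hIe | ⟨A, hA, hAI⟩
        · exfalso
          apply hsing
          intro x
          have hx : ({x} : Set X) ∈ tmuA (DOfam μ) := by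
            rw [h3]
            exact mem_superS.2 (Or.inl (hIe ▸ Set.empty_subset _))
          rcases (mem_tmu hne).1 hx with h | ⟨A, hA, hs⟩
          · exact absurd h (Set.singleton_nonempty x).ne_empty
          · exact ⟨A, hA, hs⟩
        · have hIA : ⋂₀ DOfam μ = A :=
            Set.Subset.antisymm (Set.sInter_subset_of_mem hA) hAI
          rw [hIA]; exact hA
    have htau : tauR (relA (tmuA (DOfam μ))) = superS (⋂₀ DOfam μ) := by
      ext V
      simp only [tauR, Set.mem_setOf_eq, mem_superS]
      constructor
      · intro hV
        rcases V.eq_empty_or_nonempty with rfl | ⟨x, hx⟩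
        · exact Or.inr rfl
        · left
          intro s hs
          refine hV x hx s ?_
          intro W hW hxW
          rcases (mem_tmu hne).1 hW with rfl | ⟨A, hA, hAW⟩
          · exact absurd hxW (Set.notMem_empty x)
          · exact hAW (Set.mem_sInter.1 hs A hA)
      · rintro (hIV | rfl)
        · intro x hx y hr
          by_cases hyx : y = x
          · exact hyx ▸ hx
          · refine hIV (Set.mem_sInter.2 fun A hA => ?_)
            have hW : A ∪ {x} ∈ tmuA (DOfam μ) :=
              (mem_tmu hne).2 (Or.inr ⟨A, hA, Set.subset_union_left⟩)
            rcases (Set.mem_union _ _ _).1 (hr _ hW (Set.mem_union_right _ rfl)) with h | h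
            · exact h
            · exact absurd (Set.mem_singleton_iff.1 h) hyx
        · intro x hx
          exact absurd hx (Set.notMem_empty x)
    have e34 : (tmuA (DOfam μ) = superS (⋂₀ DOfam μ)) ↔ IsAlexFam (tmuA (DOfam μ)) := by
      constructor
      · intro h3
        rw [h3]
        exact alex_superS _
      · intro h4
        apply e23.1
        have hDOsub : DOfam μ ⊆ tmuA (DOfam μ) := fun A hA =>
          (mem_tmu hne).2 (Or.inr ⟨A, hA, subset_rfl⟩)
        have hImem : ⋂₀ DOfam μ ∈ tmuA (DOfam μ) := h4.2 _ hDOsub ⟨A0, hA0⟩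
        rcases (mem_tmu hne).1 hImem with hIe | ⟨A, hA, hAI⟩
        · exfalso
          apply hsing
          intro x
          have hfam : ((fun A => A ∪ {x}) '' DOfam μ) ⊆ tmuA (DOfam μ) := by
            rintro W ⟨A, hA, rfl⟩
            exact (mem_tmu hne).2 (Or.inr ⟨A, hA, Set.subset_union_left⟩)
          have hmem : ⋂₀ ((fun A => A ∪ {x}) '' DOfam μ) ∈ tmuA (DOfam μ) :=
            h4.2 _ hfam ⟨_, Set.mem_image_of_mem _ hA0⟩
          have hxeq : ⋂₀ ((fun A => A ∪ {x}) '' DOfam μ) = {x} := by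
            apply Set.Subset.antisymm
            · intro z hz
              by_contra hzx
              have hzI : z ∈ ⋂₀ DOfam μ := by
                refine Set.mem_sInter.2 fun A hA => ?_
                have hzm := Set.mem_sInter.1 hz _ (Set.mem_image_of_mem _ hA)
                rcases (Set.mem_union _ _ _).1 hzm with h | h
                · exact h
                · exact absurd h hzx
              rw [hIe] at hzI
              exact hzI
            · intro z hz
              rcases Set.mem_singleton_iff.1 hz with rfl
              refine Set.mem_sInter.2 ?_
              rintro W ⟨A, hA, rfl⟩
              exact Set.mem_union_right _ rfl
          rw [hxeq] at hmem
          rcases (mem_tmu hne).1 hmem with h | ⟨A, hA, hs⟩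
          · exact absurd h (Set.singleton_nonempty x).ne_empty
          · exact ⟨A, hA, hs⟩
        · have hIA : ⋂₀ DOfam μ = A :=
            Set.Subset.antisymm (Set.sInter_subset_of_mem hA) hAI
          rw [hIA]; exact hA
    refine ⟨?_, e23, e34⟩
    rw [htau, eq_comm]
    exact e23.symm
  · rw [Set.not_nonempty_iff_eq_empty] at hD
    have huniv : (Set.univ : Set X) ∉ tmuA (DOfam μ) := by
      rw [hD]
      rintro (h | ⟨A, hA, _⟩)
      · obtain ⟨A, hA, _⟩ := h a (Set.mem_univ a)
        exact hA
      · exact hA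
    have n2 : ¬ (⋂₀ DOfam μ ∈ DOfam μ) := by
      rw [hD]
      exact Set.notMem_empty _
    have n3 : ¬ (tmuA (DOfam μ) = superS (⋂₀ DOfam μ)) := by
      intro h
      apply huniv
      rw [h]
      exact mem_superS.2 (Or.inl (Set.subset_univ _))
    have n1 : ¬ (tauR (relA (tmuA (DOfam μ))) = tmuA (DOfam μ)) := by
      intro h
      apply huniv
      rw [← h]
      intro x _ y _
      exact Set.mem_univ y
    have n4 : ¬ IsAlexFam (tmuA (DOfam μ)) := fun h => huniv h.1.2.1
    exact ⟨iff_of_false n1 n2, iff_of_false n2 n3, iff_of_false n3 n4⟩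
end

section
/- Let ⟨X, μ⟩ be a generalized topological space such that μ ≠ {∅, X}. Then F_d^T(X) and F_d(X) are equivalent. Furthermore, if ⟨X, μ⟩ is resolvable and non-indiscrete, then F_d^T(X) is false. -/
variable {X : Type*}

lemma gdense_mono {μ : Set (Set X)} {D E : Set X} (h : GDense μ D) (hDE : D ⊆ E) :
    GDense μ E := by
  intro U hU hUne
  obtain ⟨x, hx⟩ := h U hU hUne
  exact ⟨x, hx.1, hDE hx.2⟩

lemma key_lemma {μ : Set (Set X)} {V D : Set X} (hV : V ∈ μ) (hVne : V ≠ ∅)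
    (hVnu : V ≠ Set.univ) (hD : GDense μ D) (hDc : GDense μ Dᶜ) :
    ¬ IsTopFam (Dfam μ ∪ {∅}) := by
  rintro ⟨-, -, -, hI⟩
  have hA : GDense μ (D ∪ Vᶜ) := gdense_mono hD (Set.subset_union_left)
  have hB : GDense μ (Dᶜ ∪ Vᶜ) := gdense_mono hDc (Set.subset_union_left)
  have hAB : (D ∪ Vᶜ) ∩ (Dᶜ ∪ Vᶜ) = Vᶜ := by
    ext x; simp only [Set.mem_inter_iff, Set.mem_union, Set.mem_compl_iff]; tauto
  have := hI _ (Or.inl hA) _ (Or.inl hB)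
  rw [hAB] at this
  rcases this with h | h
  · obtain ⟨x, hx1, hx2⟩ := h V hV (Set.nonempty_iff_ne_empty.mpr hVne)
    exact hx2 hx1
  · simp only [Set.mem_singleton_iff] at h
    exact hVnu (by rw [← Set.compl_empty, ← h, compl_compl])

theorem stmt15 (μ : Set (Set X)) (hμ : IsGT μ)
    (hne : μ ≠ {∅, Set.univ}) :
    (IsTopFam (Dfam μ ∪ {∅}) ↔
      ∀ A B : Set X, GDense μ A → GDense μ B → GDense μ (A ∩ B)) ∧
    ((∃ D : Set X, GDense μ D ∧ GDense μ Dᶜ) → ¬ Indiscrete μ →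
      ¬ IsTopFam (Dfam μ ∪ {∅})) := by

  have key : ∀ D : Set X, GDense μ D → GDense μ Dᶜ → ¬ Indiscrete μ →
      ¬ IsTopFam (Dfam μ ∪ {∅}) := by
    intro D hD hDc hind
    have : ∃ V ∈ μ, V ≠ ∅ ∧ V ≠ Set.univ := by
      by_contra hcon
      push_neg at hcon
      exact hind (fun V hV => by
        rcases eq_or_ne V ∅ with h | h
        · exact Or.inl h
        · exact Or.inr (hcon V hV (Set.nonempty_iff_ne_empty.mpr h)))
    obtain ⟨V, hV, hVne, hVnu⟩ := this
    exact key_lemma hV hVne hVnu hD hDc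
  constructor
  · constructor
    · intro ht A B hA hB
      intro U hU hUne
      by_cases hAB : (A ∩ B) = ∅
      · -- then Aᶜ dense (⊇ B), and μ is not indiscrete, contradiction with key
        exfalso
        have hBsub : B ⊆ Aᶜ := by
          intro x hx hxA
          exact absurd (Set.mem_inter hxA hx) (by rw [hAB]; exact id)
        have hAc : GDense μ Aᶜ := gdense_mono hB hBsub
        have hind : ¬ Indiscrete μ := by
          intro hi
          have hUuniv : U = Set.univ := by
            rcases hi hU with h | h
            · exact absurd h (Set.nonempty_iff_ne_empty.mp hUne)
            · exact h
          apply hne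
          apply Set.Subset.antisymm hi
          intro W hW
          rcases hW with h | h
          · rw [h]; exact hμ.1
          · rw [Set.mem_singleton_iff] at h; rw [h, ← hUuniv]; exact hU
        exact key A hA hAc hind ht
      · have := ht.2.2.2 A (Or.inl hA) B (Or.inl hB)
        rcases this with h | h
        · exact h U hU hUne
        · exact absurd h hAB
    · intro hfd
      refine ⟨Or.inr rfl, Or.inl ?_, ?_, ?_⟩
      · intro U hU hUne; exact ⟨hUne.some, hUne.some_mem, trivial⟩
      · intro 𝒰 h𝒰
        by_cases hall : ∀ W ∈ 𝒰, W = (∅ : Set X)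
        · right
          simp only [Set.mem_singleton_iff]
          ext x
          simp only [Set.mem_sUnion, Set.mem_empty_iff_false, iff_false]
          rintro ⟨W, hW, hx⟩
          rw [hall W hW] at hx
          exact hx
        · push_neg at hall
          obtain ⟨W, hW, hWne⟩ := hall
          have hWd : GDense μ W := by
            rcases h𝒰 hW with h | h
            · exact h
            · exact absurd h (Set.nonempty_iff_ne_empty.mp hWne)
          exact Or.inl (gdense_mono hWd (fun x hx => ⟨W, hW, hx⟩))
      · intro A hA B hB
        rcases hA with hA | hA
        · rcases hB with hB | hB
          · exact Or.inl (hfd A B hA hB)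
          · right; rw [Set.mem_singleton_iff] at hB ⊢; rw [hB, Set.inter_empty]
        · right; rw [Set.mem_singleton_iff] at hA ⊢; rw [hA, Set.empty_inter]
  · rintro ⟨D, hD, hDc⟩ hind
    exact key D hD hDc hind
end

section
/- For every generalized topological T0-space ⟨X, μ⟩, the statements F_d(X) and F_d^T(X) are equivalent. -/
variable {X : Type*}

theorem stmt16 (μ : Set (Set X)) (hμ : IsGT μ)
    (hT0 : ∀ x y : X, x ≠ y → ∃ U ∈ μ, ∃ z : X, U ∩ {x, y} = {z}) :
    ((∀ A B : Set X, GDense μ A → GDense μ B → GDense μ (A ∩ B)) ↔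
      IsTopFam (Dfam μ ∪ {∅})) := by
  constructor
  · intro hFd
    refine ⟨Or.inr rfl, Or.inl ?_, ?_, ?_⟩
    · intro U _ hne
      simpa using hne
    · intro 𝒰 h𝒰
      by_cases h : ∃ D ∈ 𝒰, D ∈ Dfam μ
      · obtain ⟨D, hD𝒰, hD⟩ := h
        left
        intro U hU hne
        obtain ⟨x, hxU, hxD⟩ := hD U hU hne
        exact ⟨x, hxU, D, hD𝒰, hxD⟩
      · right
        push_neg at h
        have : ⋃₀ 𝒰 = ∅ := by
          ext x
          simp only [Set.mem_sUnion, Set.mem_empty_iff_false, iff_false]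
          rintro ⟨M, hM, hxM⟩
          rcases h𝒰 hM with hd | he
          · exact h M hM hd
          · simp only [Set.mem_singleton_iff] at he
            rw [he] at hxM; exact hxM
        exact this
    · rintro U (hU | hU) V (hV | hV)
      · exact Or.inl (hFd U V hU hV)
      · right; simp only [Set.mem_singleton_iff] at hV ⊢; rw [hV]; exact Set.inter_empty U
      · right; simp only [Set.mem_singleton_iff] at hU ⊢; rw [hU]; exact Set.empty_inter V
      · right; simp only [Set.mem_singleton_iff] at hU ⊢; rw [hU]; exact Set.empty_inter V
  · intro hT A B hA hB
    have hInt := hT.2.2.2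
    rcases hInt A (Or.inl hA) B (Or.inl hB) with hd | he
    · exact hd
    · -- A ∩ B = ∅ : derive contradiction for every nonempty open set
      simp only [Set.mem_singleton_iff] at he
      intro U hU hne
      exfalso
      obtain ⟨a, haU, haA⟩ := hA U hU hne
      obtain ⟨b, hbU, hbB⟩ := hB U hU hne
      have hab : a ≠ b := by
        rintro rfl
        have : a ∈ A ∩ B := ⟨haA, hbB⟩
        rw [he] at this; exact this
      -- B ∪ {a} is dense
      have hBa : GDense μ (B ∪ {a}) := by
        intro V hV hVne
        obtain ⟨y, hyV, hyB⟩ := hB V hV hVne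
        exact ⟨y, hyV, Or.inl hyB⟩
      have hAa : GDense μ (A ∪ {b}) := by
        intro V hV hVne
        obtain ⟨y, hyV, hyA⟩ := hA V hV hVne
        exact ⟨y, hyV, Or.inl hyA⟩
      -- A ∩ (B ∪ {a}) = {a}
      have hsa : A ∩ (B ∪ {a}) = {a} := by
        ext x
        constructor
        · rintro ⟨hxA, hxB | hxa⟩
          · have hx : x ∈ A ∩ B := ⟨hxA, hxB⟩
            rw [he] at hx; exact hx.elim
          · exact hxa
        · rintro rfl
          exact ⟨haA, Or.inr rfl⟩
      have hsb : B ∩ (A ∪ {b}) = {b} := by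
        ext x
        constructor
        · rintro ⟨hxB, hxA | hxb⟩
          · have hx : x ∈ A ∩ B := ⟨hxA, hxB⟩
            rw [he] at hx; exact hx.elim
          · exact hxb
        · rintro rfl
          exact ⟨hbB, Or.inr rfl⟩
      have hda : GDense μ {a} := by
        rcases hInt A (Or.inl hA) (B ∪ {a}) (Or.inl hBa) with hd | h0
        · rwa [hsa] at hd
        · simp only [Set.mem_singleton_iff, hsa] at h0
          exact absurd h0 (Set.singleton_ne_empty a)
      have hdb : GDense μ {b} := by
        rcases hInt B (Or.inl hB) (A ∪ {b}) (Or.inl hAa) with hd | h0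
        · rwa [hsb] at hd
        · simp only [Set.mem_singleton_iff, hsb] at h0
          exact absurd h0 (Set.singleton_ne_empty b)
      -- use T0
      obtain ⟨V, hV, z, hz⟩ := hT0 a b hab
      have hzV : z ∈ V := by
        have : z ∈ V ∩ {a, b} := hz ▸ rfl
        exact this.1
      have haV : a ∈ V := by
        obtain ⟨w, hwV, hwa⟩ := hda V hV ⟨z, hzV⟩
        simp only [Set.mem_singleton_iff] at hwa
        rwa [hwa] at hwV
      have hbV : b ∈ V := by
        obtain ⟨w, hwV, hwb⟩ := hdb V hV ⟨z, hzV⟩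
        simp only [Set.mem_singleton_iff] at hwb
        rwa [hwb] at hwV
      have ha' : a ∈ ({z} : Set X) := hz ▸ ⟨haV, Or.inl rfl⟩
      have hb' : b ∈ ({z} : Set X) := hz ▸ ⟨hbV, Or.inr rfl⟩
      simp only [Set.mem_singleton_iff] at ha' hb'
      exact hab (ha'.trans hb'.symm)
end

section
/- Let Y be a Hausdorff topological space and let X be a dense subspace of Y that is locally compact (in its subspace topology). Then: (i) the statements F_d(X), F_d(Y), F_d^T(X) and F_d^T(Y) are all equivalent; (ii) X is resolvable if and only if Y is resolvable. -/
/-- F_d(Z): the intersection of any two dense sets is dense. -/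
def Fd (Z : Type*) [TopologicalSpace Z] : Prop :=
  ∀ A B : Set Z, Dense A → Dense B → Dense (A ∩ B)

/-- F_d^T(Z): the intersection of any two dense sets is empty or dense. -/
def FdT (Z : Type*) [TopologicalSpace Z] : Prop :=
  ∀ A B : Set Z, Dense A → Dense B → (A ∩ B = ∅ ∨ Dense (A ∩ B))

/-- Z is resolvable: there are two disjoint dense sets. -/
def Resolvable (Z : Type*) [TopologicalSpace Z] : Prop :=
  ∃ D : Set Z, Dense D ∧ Dense Dᶜ

/-- In a T1 space, FdT implies Fd. -/
lemma fdT_to_fd {Z : Type*} [TopologicalSpace Z] [T1Space Z] (h : FdT Z) : Fd Z := by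
  intro A B hA hB
  rcases h A B hA hB with hemp | hdense
  · by_cases hne : Nonempty Z
    · exfalso
      obtain ⟨x, hx⟩ := hA.nonempty
      obtain ⟨y, hy⟩ := hB.nonempty
      have hBx : Dense (B ∪ {x}) := hB.mono Set.subset_union_left
      rcases h A (B ∪ {x}) hA hBx with h1 | h1
      · have hxm : x ∈ A ∩ (B ∪ {x}) := ⟨hx, Or.inr rfl⟩
        rw [h1] at hxm
        exact hxm
      · have hsub : A ∩ (B ∪ {x}) ⊆ {x} := by
          rintro z ⟨hzA, hzB | hzx⟩
          · exact absurd (Set.mem_inter hzA hzB) (by simp [hemp])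
          · exact hzx
        have hx_dense : Dense ({x} : Set Z) := h1.mono hsub
        have hyx : y ∈ closure ({x} : Set Z) := hx_dense y
        rw [closure_singleton] at hyx
        have : y ∈ A ∩ B := ⟨hyx ▸ hx, hy⟩
        simp [hemp] at this
    · rw [hemp]
      intro z
      exact absurd ⟨z⟩ hne
  · exact hdense

/-- A locally compact dense subspace of a Hausdorff space is open. -/
lemma isOpen_of_dense_locallyCompact {Y : Type*} [TopologicalSpace Y] [T2Space Y]
    (X : Set Y) (hd : Dense X) (hlc : LocallyCompactSpace X) : IsOpen X := by
  rw [isOpen_iff_mem_nhds]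
  intro x hx
  obtain ⟨K, hKmem, -, hKc⟩ :=
    hlc.local_compact_nhds (⟨x, hx⟩ : X) Set.univ Filter.univ_mem
  rw [nhds_subtype_eq_comap, Filter.mem_comap] at hKmem
  obtain ⟨t, ht, htK⟩ := hKmem
  have hKY : IsCompact (Subtype.val '' K) := hKc.image continuous_subtype_val
  have hKclosed : IsClosed (Subtype.val '' K) := hKY.isClosed
  have hsub : interior t ∩ X ⊆ Subtype.val '' K := by
    rintro y ⟨hy1, hy2⟩
    exact ⟨⟨y, hy2⟩, htK (show ((⟨y, hy2⟩ : X) : Y) ∈ t from interior_subset hy1), rfl⟩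
  have h1 : interior t ⊆ closure (interior t ∩ X) :=
    hd.open_subset_closure_inter isOpen_interior
  have h2 : interior t ⊆ X := fun y hy =>
    (Set.image_subset_iff.mpr (fun z _ => z.2))
      (hKclosed.closure_subset ((closure_mono hsub) (h1 hy)))
  exact Filter.mem_of_superset
    (isOpen_interior.mem_nhds (mem_interior_iff_mem_nhds.mpr ht)) h2

lemma dense_image_val {Y : Type*} [TopologicalSpace Y] {X : Set Y} (hd : Dense X)
    {A : Set X} (hA : Dense A) : Dense (Subtype.val '' A) :=
  hd.denseRange_val.dense_image continuous_subtype_val hA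

lemma dense_preimage_val {Y : Type*} [TopologicalSpace Y] {X : Set Y} (hX : IsOpen X)
    {D : Set Y} (hD : Dense D) : Dense (Subtype.val ⁻¹' D : Set X) :=
  hD.preimage hX.isOpenMap_subtype_val

theorem stmt17 {Y : Type*} [TopologicalSpace Y] [T2Space Y]
    (X : Set Y) (hd : Dense X) (hlc : LocallyCompactSpace X) :
    ((Fd X ↔ Fd Y) ∧ (Fd X ↔ FdT X) ∧ (Fd X ↔ FdT Y)) ∧
    (Resolvable X ↔ Resolvable Y) := by
  have hX : IsOpen X := isOpen_of_dense_locallyCompact X hd hlc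
  have hXY : Fd X → Fd Y := by
    intro h A B hA hB
    have h1 : Dense ((Subtype.val ⁻¹' A : Set X) ∩ (Subtype.val ⁻¹' B : Set X)) :=
      h _ _ (dense_preimage_val hX hA) (dense_preimage_val hX hB)
    have h2 : Dense (Subtype.val '' ((Subtype.val ⁻¹' A : Set X) ∩ (Subtype.val ⁻¹' B))) :=
      dense_image_val hd h1
    refine h2.mono ?_
    rintro y ⟨z, ⟨hz1, hz2⟩, rfl⟩
    exact ⟨hz1, hz2⟩
  have hYX : Fd Y → Fd X := by
    intro h A B hA hB
    have h1 : Dense (Subtype.val '' A ∩ Subtype.val '' B) :=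
      h _ _ (dense_image_val hd hA) (dense_image_val hd hB)
    rw [← Set.image_inter Subtype.val_injective] at h1
    have h2 : Dense (Subtype.val ⁻¹' (Subtype.val '' (A ∩ B)) : Set X) :=
      dense_preimage_val hX h1
    rwa [Set.preimage_image_eq _ Subtype.val_injective] at h2
  refine ⟨⟨⟨hXY, hYX⟩, ⟨fun h A B hA hB => Or.inr (h A B hA hB), fun h => fdT_to_fd h⟩,
    ⟨fun h A B hA hB => Or.inr (hXY h A B hA hB), fun h => hYX (fdT_to_fd h)⟩⟩, ?_⟩
  constructor
  · rintro ⟨D, hD, hDc⟩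
    refine ⟨Subtype.val '' D, dense_image_val hd hD, ?_⟩
    refine (dense_image_val hd hDc).mono ?_
    rintro y ⟨z, hz, rfl⟩ ⟨w, hw, hwz⟩
    exact hz (Subtype.val_injective hwz ▸ hw)
  · rintro ⟨D, hD, hDc⟩
    exact ⟨Subtype.val ⁻¹' D, dense_preimage_val hX hD, dense_preimage_val hX hDc⟩
end
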